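/- arXiv:2312.04478 — 7 statements merged into one kernel-verified Lean document; each statement's English description precedes it below -/
import Mathlib

section
/- Let d ≥ 2 be an integer and let m* : ℝ^{d−1} × [0,∞) → ℂ satisfy condition (M*) with constants (c̄, δ). Then there exist δ̃ > 0 and C > 0, depending only on c̄, δ and d, such that the function (ξ, x_d) ↦ e^{δ̃ |ξ| x_d} m*(ξ, x_d) satisfies condition (M*) with constants (C, δ̃). -/
open MeasureTheory Real

/-- Principal complex square root `√z = z^(1/2)` (principal branch of `cpow`). -/
noncomputable def csqrt (z : ℂ) : ℂ := z ^ (1/2 : ℂ)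

/-- The sector `Σ_ε = {λ ∈ ℂ : λ ≠ 0, |Arg λ| < π − ε}`. -/
def SigmaSector (ε : ℝ) : Set ℂ := {l : ℂ | l ≠ 0 ∧ |l.arg| < Real.pi - ε}

/-- Mikhlin condition (M) with constant `cbar`, with `K = ⌊(d+1)/2⌋`. -/
def CondM (d : ℕ) (m : EuclideanSpace ℝ (Fin (d-1)) → ℂ) (cbar : ℝ) : Prop :=
  ContDiffOn ℝ ((d+1)/2 : ℕ) m {ξ : EuclideanSpace ℝ (Fin (d-1)) | ξ ≠ 0} ∧
  ∀ k : ℕ, k ≤ (d+1)/2 → ∀ ξ : EuclideanSpace ℝ (Fin (d-1)), ξ ≠ 0 →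
    ‖ξ‖ ^ k * ‖iteratedFDerivWithin ℝ k m
        {ξ : EuclideanSpace ℝ (Fin (d-1)) | ξ ≠ 0} ξ‖ ≤ cbar

/-- Parameterized Mikhlin condition (M*) with constants `(cbar, δ)`, `K = ⌊(d+1)/2⌋`. -/
def CondMStar (d : ℕ) (m : EuclideanSpace ℝ (Fin (d-1)) → ℝ → ℂ) (cbar δ : ℝ) : Prop :=
  (∀ y : ℝ, 0 ≤ y →
    ContDiffOn ℝ ((d+1)/2 : ℕ) (fun ξ => m ξ y)
      {ξ : EuclideanSpace ℝ (Fin (d-1)) | ξ ≠ 0}) ∧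
  ∀ k : ℕ, k ≤ (d+1)/2 →
    ∀ ξ : EuclideanSpace ℝ (Fin (d-1)), ξ ≠ 0 → ∀ y : ℝ, 0 ≤ y →
      ‖ξ‖ ^ k * ‖iteratedFDerivWithin ℝ k (fun ξ => m ξ y)
          {ξ : EuclideanSpace ℝ (Fin (d-1)) | ξ ≠ 0} ξ‖ ≤
        cbar * Real.exp (-δ * ‖ξ‖ * y) / (1 + y)

/-- The fundamental multiplier `m₀(s, y)`. -/
noncomputable def m0 (l : ℂ) (α : ℝ) (s y : ℝ) : ℂ :=
  ((csqrt (l + (s:ℂ)^2) + s) / ((α:ℂ) + l + csqrt (l + (s:ℂ)^2) + s)) *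
    ((Complex.exp (-(y:ℂ) * csqrt (l + (s:ℂ)^2)) - Complex.exp (-(y:ℂ) * s)) / l)

/-- `E(s, y) = e^{-ys} - e^{-y√(λ+s²)}`. -/
noncomputable def Efun (l : ℂ) (s y : ℝ) : ℂ :=
  Complex.exp (-(y:ℂ) * s) - Complex.exp (-(y:ℂ) * csqrt (l + (s:ℂ)^2))

/-! Leibniz' rule reduces the claim to Mikhlin bounds for the weight `w(ξ) = exp (c ‖ξ‖)`,
`c = δ' y`. Away from `0` the norm is smooth and homogeneous of degree one, so scaling to the
unit sphere and compactness give `‖ξ‖ⁱ ‖Dⁱ ‖ξ‖‖ ≤ M ‖ξ‖`; the Faà di Bruno bound then yields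
`‖ξ‖ⁱ ‖Dⁱ w(ξ)‖ ≤ K! Mᴷ exp ((K + 1) c ‖ξ‖)`. Against the factor `exp (-δ ‖ξ‖ y)` of `m*` this
leaves `exp (((K + 1) δ' - δ) ‖ξ‖ y) = exp (-δ' ‖ξ‖ y)` for `δ' = δ / (K + 2)`. -/

open Set Finset
open scoped Nat

section Leibniz
variable {𝕜 : Type*} [NontriviallyNormedField 𝕜] {E : Type*} [NormedAddCommGroup E]
  [NormedSpace 𝕜 E] {A : Type*} [NormedRing A] [NormedAlgebra 𝕜 A]

lemma pow_mul_norm_iteratedFDerivWithin_mul_le {f g : E → A} {s : Set E} {N : WithTop ℕ∞}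
    (hf : ContDiffOn 𝕜 N f s) (hg : ContDiffOn 𝕜 N g s) (hs : UniqueDiffOn 𝕜 s) {x : E}
    (hx : x ∈ s) {n : ℕ} (hn : n ≤ N) {r Cf Cg : ℝ} (hr : 0 ≤ r)
    (hf' : ∀ i ≤ n, r ^ i * ‖iteratedFDerivWithin 𝕜 i f s x‖ ≤ Cf)
    (hg' : ∀ i ≤ n, r ^ i * ‖iteratedFDerivWithin 𝕜 i g s x‖ ≤ Cg) :
    r ^ n * ‖iteratedFDerivWithin 𝕜 n (fun y => f y * g y) s x‖ ≤ 2 ^ n * Cf * Cg := by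
  have hCf : 0 ≤ Cf := (by positivity : (0 : ℝ) ≤ _).trans (hf' 0 (Nat.zero_le _))
  calc r ^ n * ‖iteratedFDerivWithin 𝕜 n (fun y => f y * g y) s x‖
      ≤ r ^ n * ∑ i ∈ range (n + 1), (n.choose i : ℝ) * ‖iteratedFDerivWithin 𝕜 i f s x‖ *
          ‖iteratedFDerivWithin 𝕜 (n - i) g s x‖ := by
        gcongr; exact norm_iteratedFDerivWithin_mul_le hf hg hs hx hn
    _ = ∑ i ∈ range (n + 1), (n.choose i : ℝ) * (r ^ i * ‖iteratedFDerivWithin 𝕜 i f s x‖) *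
          (r ^ (n - i) * ‖iteratedFDerivWithin 𝕜 (n - i) g s x‖) := by
        rw [mul_sum]
        refine sum_congr rfl fun i hi => ?_
        rw [← pow_mul_pow_sub r (Nat.lt_succ_iff.mp (mem_range.mp hi))]
        ring
    _ ≤ ∑ i ∈ range (n + 1), (n.choose i : ℝ) * Cf * Cg := by
        refine sum_le_sum fun i hi => ?_
        have hi : i ≤ n := Nat.lt_succ_iff.mp (mem_range.mp hi)
        gcongr
        exacts [hf' i hi, hg' (n - i) (Nat.sub_le n i)]
    _ = 2 ^ n * Cf * Cg := by
        rw [← sum_mul, ← sum_mul, ← Nat.cast_sum, Nat.sum_range_choose]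
        push_cast; ring

end Leibniz

section Norm
variable {E : Type*} [NormedAddCommGroup E] [InnerProductSpace ℝ E]

lemma contDiffOn_norm_ne_zero {n : WithTop ℕ∞} :
    ContDiffOn ℝ n (fun x : E => ‖x‖) {x | x ≠ 0} :=
  fun _ hx => (contDiffAt_norm ℝ hx).contDiffWithinAt

lemma contDiffOn_ofReal_exp_mul_norm {n : WithTop ℕ∞} (c : ℝ) :
    ContDiffOn ℝ n (fun x : E => (Real.exp (c * ‖x‖) : ℂ)) {x | x ≠ 0} :=
  Complex.ofRealCLM.contDiff.comp_contDiffOn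
    (Real.contDiff_exp.comp_contDiffOn (contDiffOn_const.mul contDiffOn_norm_ne_zero))

lemma mul_norm_iteratedFDerivWithin_norm_le (i : ℕ) {t : ℝ} (ht : 0 < t) {x : E} (hx : x ≠ 0) :
    t * ‖iteratedFDerivWithin ℝ i (fun x : E => ‖x‖) {x | x ≠ 0} x‖ ≤
      t ^ i * ‖iteratedFDerivWithin ℝ i (fun x : E => ‖x‖) {x | x ≠ 0} (t • x)‖ := by
  set s : Set E := {x | x ≠ 0}
  have hs : UniqueDiffOn ℝ s := isOpen_ne.uniqueDiffOn
  set g : E →L[ℝ] E := t • ContinuousLinearMap.id ℝ E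
  have hpre : ⇑g ⁻¹' s = s := by ext; simp [s, g, ht.ne']
  have hcomp : (fun x : E => ‖x‖) ∘ g = t • fun x : E => ‖x‖ := by
    funext y; simp [g, norm_smul, abs_of_pos ht]
  have hgx : g x ∈ s := by simp [s, g, ht.ne', hx]
  have key := g.iteratedFDerivWithin_comp_right contDiffOn_norm_ne_zero hs (hpre ▸ hs) hgx
    (le_refl (i : WithTop ℕ∞))
  rw [hpre, hcomp, iteratedFDerivWithin_const_smul_apply
    (contDiffOn_norm_ne_zero.contDiffWithinAt hx) hs hx] at key
  have hg : ‖g‖ ≤ t := by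
    refine (norm_smul_le t (ContinuousLinearMap.id ℝ E)).trans ?_
    rw [Real.norm_of_nonneg ht.le]
    exact mul_le_of_le_one_right ht.le ContinuousLinearMap.norm_id_le
  calc t * ‖iteratedFDerivWithin ℝ i (fun x : E => ‖x‖) s x‖
      = ‖t • iteratedFDerivWithin ℝ i (fun x : E => ‖x‖) s x‖ := by
        rw [norm_smul, Real.norm_of_nonneg ht.le]
    _ ≤ ‖iteratedFDerivWithin ℝ i (fun x : E => ‖x‖) s (g x)‖ * ∏ _ : Fin i, ‖g‖ := by
        rw [key]; exact ContinuousMultilinearMap.norm_compContinuousLinearMap_le _ _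
    _ ≤ t ^ i * ‖iteratedFDerivWithin ℝ i (fun x : E => ‖x‖) s (t • x)‖ := by
        rw [prod_const, card_univ, Fintype.card_fin, mul_comm]
        change _ * ‖iteratedFDerivWithin ℝ i _ s (t • x)‖ ≤ _
        gcongr

lemma exists_pow_mul_norm_iteratedFDerivWithin_norm_le [ProperSpace E] (K : ℕ) :
    ∃ M : ℝ, 1 ≤ M ∧ ∀ i ≤ K, ∀ x : E, x ≠ 0 →
      ‖x‖ ^ i * ‖iteratedFDerivWithin ℝ i (fun x : E => ‖x‖) {x | x ≠ 0} x‖ ≤ M * ‖x‖ := by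
  have hsphere : Metric.sphere (0 : E) 1 ⊆ {x | x ≠ 0} := fun u hu h => by simp [h] at hu
  have hbound : ∀ i : ℕ, ∃ C : ℝ, ∀ u ∈ Metric.sphere (0 : E) 1,
      ‖iteratedFDerivWithin ℝ i (fun x : E => ‖x‖) {x | x ≠ 0} u‖ ≤ C := fun i =>
    (isCompact_sphere 0 1).exists_bound_of_continuousOn <|
      (contDiffOn_norm_ne_zero.continuousOn_iteratedFDerivWithin (le_refl (i : WithTop ℕ∞))
        isOpen_ne.uniqueDiffOn).mono hsphere
  choose C hC using hbound
  refine ⟨1 + ∑ j ∈ range (K + 1), |C j|, ?_, fun i hi x hx => ?_⟩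
  · have := sum_nonneg fun j (_ : j ∈ range (K + 1)) => abs_nonneg (C j)
    linarith
  have hr : 0 < ‖x‖ := norm_pos_iff.2 hx
  have hCi : C i ≤ 1 + ∑ j ∈ range (K + 1), |C j| := by
    have := single_le_sum (f := fun j => |C j|) (fun j _ => abs_nonneg _)
      (mem_range.2 (Nat.lt_succ_of_le hi))
    linarith [le_abs_self (C i)]
  have hunit : ‖x‖⁻¹ • x ∈ Metric.sphere (0 : E) 1 := by
    simp [norm_smul, hr.ne']
  have hscale := mul_norm_iteratedFDerivWithin_norm_le i (inv_pos.2 hr) hx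
  have hD := (hC i _ hunit).trans hCi
  calc ‖x‖ ^ i * ‖iteratedFDerivWithin ℝ i (fun x : E => ‖x‖) {x | x ≠ 0} x‖
      = ‖x‖ ^ (i + 1) * (‖x‖⁻¹ *
          ‖iteratedFDerivWithin ℝ i (fun x : E => ‖x‖) {x | x ≠ 0} x‖) := by
        field_simp; ring
    _ ≤ ‖x‖ ^ (i + 1) * (‖x‖⁻¹ ^ i * (1 + ∑ j ∈ range (K + 1), |C j|)) :=
        mul_le_mul_of_nonneg_left (hscale.trans (mul_le_mul_of_nonneg_left hD (by positivity)))
          (by positivity)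
    _ = (1 + ∑ j ∈ range (K + 1), |C j|) * ‖x‖ := by
        rw [inv_pow, pow_succ]; field_simp

lemma norm_iteratedFDerivWithin_const_mul_norm_le {i : ℕ} (hi : 1 ≤ i) {M : ℝ} (hM : 1 ≤ M)
    {x : E} (hx : x ≠ 0)
    (hN : ‖x‖ ^ i * ‖iteratedFDerivWithin ℝ i (fun x : E => ‖x‖) {x | x ≠ 0} x‖ ≤ M * ‖x‖)
    {c : ℝ} (hc : 0 ≤ c) :
    ‖iteratedFDerivWithin ℝ i (fun x : E => c * ‖x‖) {x | x ≠ 0} x‖ ≤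
      (M * (c + ‖x‖⁻¹)) ^ i := by
  have hr : 0 < ‖x‖ := norm_pos_iff.2 hx
  rw [show (fun x : E => c * ‖x‖) = c • fun x : E => ‖x‖ from rfl,
    iteratedFDerivWithin_const_smul_apply (contDiffOn_norm_ne_zero.contDiffWithinAt hx)
      isOpen_ne.uniqueDiffOn hx, norm_smul, Real.norm_of_nonneg hc]
  refine le_of_mul_le_mul_left ?_ (pow_pos hr i)
  calc ‖x‖ ^ i * (c * ‖iteratedFDerivWithin ℝ i (fun x : E => ‖x‖) {x | x ≠ 0} x‖)
      ≤ c * (M * ‖x‖) := by nlinarith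
    _ ≤ M * (c * ‖x‖ + 1) := by nlinarith [mul_nonneg hc hr.le]
    _ ≤ (M * (c * ‖x‖ + 1)) ^ i :=
        le_self_pow₀ (one_le_mul_of_one_le_of_one_le hM (by nlinarith [mul_nonneg hc hr.le]))
          (by omega)
    _ = ‖x‖ ^ i * (M * (c + ‖x‖⁻¹)) ^ i := by
        rw [← mul_pow]; congr 1; field_simp

lemma pow_mul_norm_iteratedFDerivWithin_exp_mul_norm_le {k : ℕ} {M : ℝ} (hM : 1 ≤ M)
    (hN : ∀ i ≤ k, ∀ x : E, x ≠ 0 →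
      ‖x‖ ^ i * ‖iteratedFDerivWithin ℝ i (fun x : E => ‖x‖) {x | x ≠ 0} x‖ ≤ M * ‖x‖)
    {c : ℝ} (hc : 0 ≤ c) {x : E} (hx : x ≠ 0) :
    ‖x‖ ^ k * ‖iteratedFDerivWithin ℝ k (fun x : E => Real.exp (c * ‖x‖)) {x | x ≠ 0} x‖ ≤
      k ! * M ^ k * Real.exp ((k + 1) * (c * ‖x‖)) := by
  have hexp : ∀ i ≤ k, ‖iteratedFDerivWithin ℝ i Real.exp univ (c * ‖x‖)‖ ≤
      Real.exp (c * ‖x‖) := fun i _ => by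
    rw [iteratedFDerivWithin_univ, norm_iteratedFDeriv_eq_norm_iteratedDeriv,
      iteratedDeriv_eq_iterate, Real.iter_deriv_exp, Real.norm_of_nonneg (Real.exp_pos _).le]
  have hfaa := norm_iteratedFDerivWithin_comp_le (g := Real.exp) (t := univ)
    Real.contDiff_exp.contDiffOn (contDiffOn_const.mul contDiffOn_norm_ne_zero)
    (le_refl (k : WithTop ℕ∞)) uniqueDiffOn_univ isOpen_ne.uniqueDiffOn (mapsTo_univ _ _) hx
    hexp fun i hi hik => norm_iteratedFDerivWithin_const_mul_norm_le hi hM hx (hN i hik x hx) hc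
  calc ‖x‖ ^ k * ‖iteratedFDerivWithin ℝ k (fun x : E => Real.exp (c * ‖x‖)) {x | x ≠ 0} x‖
      ≤ ‖x‖ ^ k * (k ! * Real.exp (c * ‖x‖) * (M * (c + ‖x‖⁻¹)) ^ k) := by
        gcongr; exact hfaa
    _ = k ! * M ^ k * (c * ‖x‖ + 1) ^ k * Real.exp (c * ‖x‖) := by
        rw [mul_pow]
        have : ‖x‖ ^ k * (c + ‖x‖⁻¹) ^ k = (c * ‖x‖ + 1) ^ k := by
          rw [← mul_pow]; congr 1; field_simp
        linear_combination (k ! * M ^ k * Real.exp (c * ‖x‖)) * this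
    _ ≤ k ! * M ^ k * Real.exp (c * ‖x‖) ^ k * Real.exp (c * ‖x‖) := by
        gcongr
        linarith [Real.add_one_le_exp (c * ‖x‖)]
    _ = k ! * M ^ k * Real.exp ((k + 1) * (c * ‖x‖)) := by
        rw [mul_assoc, ← Real.exp_nat_mul, ← Real.exp_add]
        ring_nf

lemma pow_mul_norm_iteratedFDerivWithin_ofReal_exp_mul_norm_le {K : ℕ} {M : ℝ} (hM : 1 ≤ M)
    (hN : ∀ i ≤ K, ∀ x : E, x ≠ 0 →
      ‖x‖ ^ i * ‖iteratedFDerivWithin ℝ i (fun x : E => ‖x‖) {x | x ≠ 0} x‖ ≤ M * ‖x‖)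
    {c : ℝ} (hc : 0 ≤ c) {i : ℕ} (hi : i ≤ K) {x : E} (hx : x ≠ 0) :
    ‖x‖ ^ i *
        ‖iteratedFDerivWithin ℝ i (fun x : E => (Real.exp (c * ‖x‖) : ℂ)) {x | x ≠ 0} x‖ ≤
      K ! * M ^ K * Real.exp ((K + 1) * (c * ‖x‖)) := by
  have hreal : ContDiffOn ℝ i (fun x : E => Real.exp (c * ‖x‖)) {x | x ≠ 0} :=
    Real.contDiff_exp.comp_contDiffOn (contDiffOn_const.mul contDiffOn_norm_ne_zero)
  rw [show (fun x : E => (Real.exp (c * ‖x‖) : ℂ)) =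
      Complex.ofRealLI ∘ fun x : E => Real.exp (c * ‖x‖) from rfl,
    Complex.ofRealLI.norm_iteratedFDerivWithin_comp_left (hreal.contDiffWithinAt hx)
      isOpen_ne.uniqueDiffOn hx le_rfl]
  refine (pow_mul_norm_iteratedFDerivWithin_exp_mul_norm_le hM
    (fun j hj => hN j (hj.trans hi)) hc hx).trans ?_
  have hcx : 0 ≤ c * ‖x‖ := by positivity
  gcongr

end Norm

theorem stmt_1_general (d : ℕ) (cbar δ : ℝ) (hcbar : 0 < cbar) (hδ : 0 < δ) :
    ∃ δ' C : ℝ, 0 < δ' ∧ 0 < C ∧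
      ∀ m : EuclideanSpace ℝ (Fin (d-1)) → ℝ → ℂ,
        CondMStar d m cbar δ →
        CondMStar d (fun ξ y => (Real.exp (δ' * ‖ξ‖ * y) : ℂ) * m ξ y) C δ' := by
  set K := (d + 1) / 2
  obtain ⟨M, hM, hN⟩ :=
    exists_pow_mul_norm_iteratedFDerivWithin_norm_le (E := EuclideanSpace ℝ (Fin (d-1))) K
  set δ' := δ / (K + 2)
  have hδ' : 0 < δ' := by positivity
  refine ⟨δ', 2 ^ K * (K ! * M ^ K) * cbar, hδ', by positivity, fun m hm => ?_⟩
  have hweight : ∀ y : ℝ, (fun ξ : EuclideanSpace ℝ (Fin (d-1)) =>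
      (Real.exp (δ' * ‖ξ‖ * y) : ℂ) * m ξ y) =
      fun ξ => (Real.exp ((δ' * y) * ‖ξ‖) : ℂ) * m ξ y := fun y => by
    funext ξ; ring_nf
  refine ⟨fun y hy => ?_, fun k hk ξ hξ y hy => ?_⟩
  · beta_reduce
    rw [hweight y]
    exact (contDiffOn_ofReal_exp_mul_norm (δ' * y)).mul (hm.1 y hy)
  replace hk : k ≤ K := hk
  have hexp : Real.exp ((K + 1) * (δ' * y * ‖ξ‖)) * Real.exp (-δ * ‖ξ‖ * y) =
      Real.exp (-δ' * ‖ξ‖ * y) := by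
    rw [← Real.exp_add]; congr 1; simp only [δ']; field_simp; ring
  calc ‖ξ‖ ^ k * ‖iteratedFDerivWithin ℝ k
        (fun ξ => (Real.exp (δ' * ‖ξ‖ * y) : ℂ) * m ξ y) {ξ | ξ ≠ 0} ξ‖
      ≤ 2 ^ k * (K ! * M ^ K * Real.exp ((K + 1) * (δ' * y * ‖ξ‖))) *
          (cbar * Real.exp (-δ * ‖ξ‖ * y) / (1 + y)) := by
        rw [hweight y]
        exact pow_mul_norm_iteratedFDerivWithin_mul_le (contDiffOn_ofReal_exp_mul_norm _)
          (hm.1 y hy) isOpen_ne.uniqueDiffOn hξ (by exact_mod_cast hk) (norm_nonneg ξ)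
          (fun i hi => pow_mul_norm_iteratedFDerivWithin_ofReal_exp_mul_norm_le hM hN
            (by positivity) (hi.trans hk) hξ)
          (fun i hi => hm.2 i (hi.trans hk) ξ hξ y hy)
    _ = 2 ^ k * (K ! * M ^ K) * cbar *
          (Real.exp ((K + 1) * (δ' * y * ‖ξ‖)) * Real.exp (-δ * ‖ξ‖ * y)) / (1 + y) := by
        ring
    _ ≤ 2 ^ K * (K ! * M ^ K) * cbar * Real.exp (-δ' * ‖ξ‖ * y) / (1 + y) := by
        rw [hexp]
        have : 0 < 1 + y := by linarith
        gcongr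
        exact one_le_two

/-- `e^{δ̃|ξ|x_d} m*(ξ, x_d)` satisfies (M*) for small enough `δ̃`. -/
theorem stmt_1 (d : ℕ) (hd : 2 ≤ d) (cbar δ : ℝ) (hcbar : 0 < cbar) (hδ : 0 < δ) :
    ∃ δ' C : ℝ, 0 < δ' ∧ 0 < C ∧
      ∀ m : EuclideanSpace ℝ (Fin (d-1)) → ℝ → ℂ,
        CondMStar d m cbar δ →
        CondMStar d (fun ξ y => (Real.exp (δ' * ‖ξ‖ * y) : ℂ) * m ξ y) C δ' :=
  stmt_1_general d cbar δ hcbar hδ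
end

section
/- For every ε ∈ (0, π) there exists a constant c > 0, depending only on ε, such that Re √(λ + s²) ≥ c (s + √|λ|) for all λ ∈ Σ_ε and all real s ≥ 0. -/
open MeasureTheory Real

/-! With `k = cos ε`, the sector `Σ_ε` lies in the cone `-k ‖w‖ ≤ Re w`, and this cone is
stable under adding a nonnegative real `t`. On the cone, `‖w + t‖` is comparable to `‖w‖ + t`
and `‖w + t‖ + Re (w + t) ≥ (1 - k) ‖w + t‖`; since `(Re √z)² = (‖z‖ + Re z) / 2`, this gives
`(Re √(λ + s²))² ≳ ‖λ‖ + s² ≳ (s + √‖λ‖)²` with constants depending only on `1 - cos ε`. -/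

lemma csqrt_re (z : ℂ) : (csqrt z).re = √((‖z‖ + z.re) / 2) := by
  rw [csqrt, one_div, Complex.cpow_inv_two_re]

lemma neg_cos_mul_norm_lt_re_of_mem_sigmaSector {ε : ℝ} (hε : 0 ≤ ε) {l : ℂ}
    (hl : l ∈ SigmaSector ε) : -(cos ε * ‖l‖) < l.re := by
  have hcos : cos (π - ε) < cos |l.arg| :=
    cos_lt_cos_of_nonneg_of_le_pi (abs_nonneg _) (by linarith) hl.2
  rw [cos_pi_sub, cos_abs, Complex.cos_arg hl.1, lt_div_iff₀ (norm_pos_iff.mpr hl.1)] at hcos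
  linarith

section Cone

variable {k : ℝ} {w : ℂ} {t : ℝ}

lemma sq_norm_add_ofReal (w : ℂ) (t : ℝ) : ‖w + t‖ ^ 2 = ‖w‖ ^ 2 + 2 * t * w.re + t ^ 2 := by
  simp only [Complex.sq_norm, Complex.normSq_apply, Complex.add_re, Complex.add_im,
    Complex.ofReal_re, Complex.ofReal_im, add_zero]
  ring

lemma neg_mul_norm_le_re_add_ofReal (hk : -1 ≤ k) (hk' : k ≤ 1) (hw : -(k * ‖w‖) ≤ w.re)
    (ht : 0 ≤ t) : -(k * ‖w + t‖) ≤ (w + t).re := by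
  rw [Complex.add_re, Complex.ofReal_re]
  rcases lt_or_ge k 0 with hk₀ | hk₀
  · have : ‖w + t‖ ≤ ‖w‖ + t := by
      simpa [abs_of_nonneg ht] using norm_add_le w (t : ℂ)
    nlinarith [mul_le_mul_of_nonneg_left this (neg_nonneg.mpr hk₀.le)]
  rcases le_or_gt 0 (w.re + t) with hre | hre
  · nlinarith [norm_nonneg (w + t)]
  -- Both real parts are negative, so the cone condition amounts to `Re² ≤ k² ‖·‖²`,
  -- and `Re²` only decreases when moving from `w` to `w + t`.
  have hnorm : ‖w‖ ^ 2 = w.re ^ 2 + w.im ^ 2 := by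
    rw [Complex.sq_norm, Complex.normSq_apply]; ring
  have hnorm' := sq_norm_add_ofReal w t
  have hw' : w.re ^ 2 ≤ k ^ 2 * ‖w‖ ^ 2 := by nlinarith
  have hre_sq : (w.re + t) ^ 2 ≤ w.re ^ 2 := by nlinarith
  have hsq : (w.re + t) ^ 2 ≤ (k * ‖w + t‖) ^ 2 := by
    nlinarith [mul_le_mul_of_nonneg_left hre_sq (by nlinarith : 0 ≤ 1 - k ^ 2)]
  exact (abs_le_of_sq_le_sq' hsq (by positivity)).1

lemma half_one_sub_mul_le_norm_add_ofReal (hk : -1 ≤ k) (hk' : k ≤ 1)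
    (hw : -(k * ‖w‖) ≤ w.re) (ht : 0 ≤ t) : (1 - k) / 2 * (‖w‖ + t) ≤ ‖w + t‖ := by
  have hsq : (1 - k) / 2 * (‖w‖ + t) ^ 2 ≤ ‖w + t‖ ^ 2 := by
    nlinarith [sq_norm_add_ofReal w t, mul_nonneg ht (neg_le_iff_add_nonneg.mp hw),
      mul_nonneg (neg_le_iff_add_nonneg'.mp hk) (sq_nonneg (‖w‖ - t))]
  have ha : 0 ≤ (1 - k) / 2 := by linarith
  have ha' : (1 - k) / 2 ≤ 1 := by linarith
  refine (abs_le_of_sq_le_sq' ?_ (norm_nonneg _)).2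
  nlinarith [mul_le_mul_of_nonneg_right ha' (mul_nonneg ha (sq_nonneg (‖w‖ + t)))]

end Cone

/-- `Re √(λ + s²) ≥ c (s + √|λ|)` on the sector. -/
theorem stmt_6 (ε : ℝ) (hε : ε ∈ Set.Ioo 0 Real.pi) :
    ∃ c : ℝ, 0 < c ∧ ∀ l ∈ SigmaSector ε, ∀ s : ℝ, 0 ≤ s →
      c * (s + Real.sqrt ‖l‖) ≤ (csqrt (l + (s:ℂ)^2)).re := by
  obtain ⟨hε₀, hεπ⟩ := hε
  have hk : cos ε < 1 := by
    simpa using cos_lt_cos_of_nonneg_of_le_pi le_rfl hεπ.le hε₀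
  refine ⟨(1 - cos ε) / 4, by linarith, fun l hl s _ => ?_⟩
  have hl_cone := (neg_cos_mul_norm_lt_re_of_mem_sigmaSector hε₀.le hl).le
  rw [← Complex.ofReal_pow, csqrt_re]
  have hz_cone := neg_mul_norm_le_re_add_ofReal (neg_one_le_cos ε) hk.le hl_cone (sq_nonneg s)
  have hz_norm := half_one_sub_mul_le_norm_add_ofReal (neg_one_le_cos ε) hk.le hl_cone
    (sq_nonneg s)
  have hs_sqrt : (s + √‖l‖) ^ 2 ≤ 2 * (‖l‖ + s ^ 2) := by
    nlinarith [sq_nonneg (s - √‖l‖), sq_sqrt (norm_nonneg l)]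
  apply le_sqrt_of_sq_le
  nlinarith [mul_le_mul_of_nonneg_left hz_norm (by linarith : 0 ≤ 1 - cos ε),
    mul_le_mul_of_nonneg_left hs_sqrt (sq_nonneg ((1 - cos ε) / 4)), norm_nonneg l]
end

section
/- For every λ ∈ ℂ and every real s ≥ 0, one has √|λ| ≤ |√(λ + s²) + s|. -/
open MeasureTheory Real

/-! Writing `w = √(λ + s²)`, we have `λ = (w + s)(w - s)`, and since `Re w ≥ 0` and `s ≥ 0`,
`w - s` is no longer than `w + s`; hence `|λ| ≤ |w + s|²`. -/

lemma csqrt_sq (z : ℂ) : csqrt z ^ 2 = z := by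
  rw [csqrt, one_div]
  exact_mod_cast Complex.cpow_nat_inv_pow z two_ne_zero

/-- `√z = exp (log z / 2)` has argument `arg z / 2 ∈ (-π/2, π/2]`. -/
lemma csqrt_re_nonneg (z : ℂ) : 0 ≤ (csqrt z).re := by
  rcases eq_or_ne z 0 with rfl | hz
  · simp [csqrt]
  rw [csqrt, Complex.cpow_def_of_ne_zero hz, Complex.exp_re]
  refine mul_nonneg (Real.exp_pos _).le (Real.cos_nonneg_of_mem_Icc ?_)
  have := abs_le.mp (Complex.abs_arg_le_pi z)
  constructor <;> simp [Complex.log_im] <;> linarith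

lemma Complex.norm_sub_ofReal_le_norm_add_ofReal {w : ℂ} {s : ℝ} (hw : 0 ≤ w.re) (hs : 0 ≤ s) :
    ‖w - s‖ ≤ ‖w + s‖ := by
  rw [← sq_le_sq₀ (norm_nonneg _) (norm_nonneg _), ← Complex.normSq_eq_norm_sq,
    ← Complex.normSq_eq_norm_sq, Complex.normSq_apply, Complex.normSq_apply]
  simp only [Complex.sub_re, Complex.add_re, Complex.sub_im, Complex.add_im, Complex.ofReal_re,
    Complex.ofReal_im, sub_zero, add_zero]
  -- `‖w + s‖² - ‖w - s‖² = 4 s Re w`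
  nlinarith [mul_nonneg hw hs]

lemma Complex.sqrt_norm_sq_sub_sq_le {w : ℂ} {s : ℝ} (hw : 0 ≤ w.re) (hs : 0 ≤ s) :
    √‖w ^ 2 - (s : ℂ) ^ 2‖ ≤ ‖w + s‖ := by
  rw [Real.sqrt_le_left (norm_nonneg _), sq_sub_sq, norm_mul, sq]
  exact mul_le_mul_of_nonneg_left (norm_sub_ofReal_le_norm_add_ofReal hw hs) (norm_nonneg _)

/-- `√|λ| ≤ |√(λ+s²) + s|`. -/
theorem stmt_8 (l : ℂ) (s : ℝ) (hs : 0 ≤ s) :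
    Real.sqrt ‖l‖ ≤ ‖csqrt (l + (s:ℂ)^2) + s‖ := by
  have := Complex.sqrt_norm_sq_sub_sq_le (csqrt_re_nonneg (l + (s : ℂ) ^ 2)) hs
  rwa [csqrt_sq, add_sub_cancel_right] at this
end

section
/- For every ε ∈ (0, π) and ω > 0 there exist constants c₀, δ > 0, depending only on ε and ω, such that (1 + y) |exp(−y √(λ + s²))| ≤ c₀ e^{−δ s y} for all λ ∈ Σ_ε with |λ| ≥ ω and all real s, y ≥ 0. -/
/-
On `Σ_ε` the cosine of the argument is at least `-cos ε`, so `Re λ ≥ -M ‖λ‖` with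
`M = max (cos ε) 0 < 1`. This cone condition survives adding `s² ≥ 0`, and on the cone
`(Re √w)² = (‖w‖ + Re w) / 2 ≥ (1 - M) ‖w‖ / 2`, while `‖λ + s²‖ ≥ (1 - M) (‖λ‖ + s²) / 2`.
Hence `Re √(λ + s²) ≥ δ (√ω + s)` with `δ = (1 - M) / 4`, and the factor `1 + y` is absorbed
by `e^{-δ √ω y}` because `(1 + y) e^{-a y} ≤ 1 + 1/a`.
-/

open MeasureTheory Real

lemma neg_cos_mul_norm_le_re_of_mem_SigmaSector {ε : ℝ} (hε : 0 ≤ ε) {l : ℂ}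
    (hl : l ∈ SigmaSector ε) : -(Real.cos ε * ‖l‖) ≤ l.re := by
  have hcos : Real.cos (π - ε) ≤ Real.cos |l.arg| :=
    Real.cos_le_cos_of_nonneg_of_le_pi (abs_nonneg _) (by linarith) hl.2.le
  rw [Real.cos_abs, Real.cos_pi_sub] at hcos
  rw [← Complex.norm_mul_cos_arg]
  nlinarith [norm_nonneg l]

lemma neg_mul_norm_le_re_add_ofReal_s10 {M : ℝ} (hM0 : 0 ≤ M) (hM1 : M ≤ 1) {l : ℂ}
    (hl : -(M * ‖l‖) ≤ l.re) {t : ℝ} (ht : 0 ≤ t) : -(M * ‖l + t‖) ≤ (l + t).re := by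
  have htri : ‖l‖ ≤ ‖l + t‖ + t := by
    simpa [abs_of_nonneg ht] using norm_le_norm_add_norm_sub' l (l + t)
  rw [Complex.add_re, Complex.ofReal_re]
  nlinarith

lemma mul_norm_add_norm_le_norm_add_ofReal {M : ℝ} (hM0 : 0 ≤ M) (hM1 : M ≤ 1) {l : ℂ}
    (hl : -(M * ‖l‖) ≤ l.re) {t : ℝ} (ht : 0 ≤ t) :
    (1 - M) / 2 * (‖l‖ + t) ≤ ‖l + t‖ := by
  have hsq : ‖l + t‖ ^ 2 = ‖l‖ ^ 2 + 2 * t * l.re + t ^ 2 := by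
    rw [Complex.sq_norm, Complex.sq_norm, Complex.normSq_apply, Complex.normSq_apply]
    simp only [Complex.add_re, Complex.add_im, Complex.ofReal_re, Complex.ofReal_im]
    ring
  have hcone : (1 - M) * (‖l‖ ^ 2 + t ^ 2) ≤ ‖l + t‖ ^ 2 := by
    nlinarith [mul_nonneg hM0 (sq_nonneg (‖l‖ - t)), mul_le_mul_of_nonneg_left hl ht]
  have hc : 0 ≤ 1 - M := sub_nonneg.2 hM1
  refine (pow_le_pow_iff_left₀ (by positivity) (norm_nonneg _) two_ne_zero).1 ?_
  calc ((1 - M) / 2 * (‖l‖ + t)) ^ 2 ≤ (1 - M) ^ 2 * (‖l‖ ^ 2 + t ^ 2) := by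
        nlinarith [mul_nonneg (sq_nonneg (1 - M)) (sq_nonneg (‖l‖ - t))]
    _ ≤ (1 - M) * (‖l‖ ^ 2 + t ^ 2) := by
        gcongr
        nlinarith
    _ ≤ ‖l + t‖ ^ 2 := hcone

lemma re_csqrt (w : ℂ) : (csqrt w).re = √((‖w‖ + w.re) / 2) := by
  rw [csqrt, one_div, Complex.cpow_inv_two_re]

lemma mul_sqrt_add_le_re_csqrt_add_sq {M : ℝ} (hM0 : 0 ≤ M) (hM1 : M ≤ 1) {l : ℂ}
    (hl : -(M * ‖l‖) ≤ l.re) {ω : ℝ} (hω : ω ≤ ‖l‖) {s : ℝ} (hs : 0 ≤ s) :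
    (1 - M) / 4 * (√ω + s) ≤ (csqrt (l + (s : ℂ) ^ 2)).re := by
  have hcast : (s : ℂ) ^ 2 = ((s ^ 2 : ℝ) : ℂ) := by push_cast; rfl
  have hwre := neg_mul_norm_le_re_add_ofReal_s10 hM0 hM1 hl (sq_nonneg s)
  have hwnorm := mul_norm_add_norm_le_norm_add_ofReal hM0 hM1 hl (sq_nonneg s)
  rw [hcast, re_csqrt]
  set w := l + ((s ^ 2 : ℝ) : ℂ)
  have hsqrtω : √ω ^ 2 ≤ ‖l‖ := by
    calc √ω ^ 2 ≤ √‖l‖ ^ 2 := by gcongr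
      _ = ‖l‖ := Real.sq_sqrt (norm_nonneg l)
  have hc : 0 ≤ 1 - M := sub_nonneg.2 hM1
  rw [Real.le_sqrt (by positivity) (by linarith [abs_le.1 (Complex.abs_re_le_norm w)])]
  calc ((1 - M) / 4 * (√ω + s)) ^ 2 ≤ (1 - M) * ((1 - M) / 2 * (‖l‖ + s ^ 2)) / 2 := by
        nlinarith [mul_nonneg (sq_nonneg (1 - M)) (sq_nonneg (√ω - s)),
          mul_le_mul_of_nonneg_left hsqrtω (sq_nonneg (1 - M))]
    _ ≤ (1 - M) * ‖w‖ / 2 := by gcongr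
    _ ≤ (‖w‖ + w.re) / 2 := by linarith

lemma one_add_le_one_add_inv_mul_exp {a : ℝ} (ha : 0 < a) {y : ℝ} (hy : 0 ≤ y) :
    1 + y ≤ (1 + a⁻¹) * Real.exp (a * y) := by
  calc 1 + y ≤ (1 + a⁻¹) * (a * y + 1) := by
        field_simp
        nlinarith [mul_nonneg ha.le hy]
    _ ≤ (1 + a⁻¹) * Real.exp (a * y) := by
        gcongr
        exact Real.add_one_le_exp _

lemma one_add_mul_norm_exp_neg_mul_le {a δ s y : ℝ} {z : ℂ} (ha : 0 < a) (hy : 0 ≤ y)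
    (hz : a + δ * s ≤ z.re) :
    (1 + y) * ‖Complex.exp (-(y : ℂ) * z)‖ ≤ (1 + a⁻¹) * Real.exp (-δ * s * y) := by
  rw [Complex.norm_exp]
  calc (1 + y) * Real.exp (-(y : ℂ) * z).re
      ≤ (1 + a⁻¹) * Real.exp (a * y) * Real.exp (-(a * y) - δ * s * y) := by
        gcongr
        · exact one_add_le_one_add_inv_mul_exp ha hy
        · simp only [neg_mul, Complex.neg_re, Complex.re_ofReal_mul]
          nlinarith
    _ = (1 + a⁻¹) * Real.exp (-δ * s * y) := by
        rw [mul_assoc, ← Real.exp_add]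
        ring_nf

/-- `(1+y)|e^{-y√(λ+s²)}| ≤ c₀ e^{-δ s y}` for `λ ∈ Σ_ε`, `|λ| ≥ ω`. -/
theorem stmt_10 (ε ω : ℝ) (hε : ε ∈ Set.Ioo 0 Real.pi) (hω : 0 < ω) :
    ∃ c₀ δ : ℝ, 0 < c₀ ∧ 0 < δ ∧
      ∀ l ∈ SigmaSector ε, ω ≤ ‖l‖ → ∀ s y : ℝ, 0 ≤ s → 0 ≤ y →
        (1 + y) * ‖Complex.exp (-(y:ℂ) * csqrt (l + (s:ℂ)^2))‖ ≤
          c₀ * Real.exp (-δ * s * y) := by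
  have hcos : Real.cos ε < 1 := by
    simpa using Real.cos_lt_cos_of_nonneg_of_le_pi le_rfl hε.2.le hε.1
  obtain ⟨M, hM0, hM1, hcosM⟩ : ∃ M, 0 ≤ M ∧ M < 1 ∧ Real.cos ε ≤ M :=
    ⟨max (Real.cos ε) 0, le_max_right _ _, max_lt hcos one_pos, le_max_left _ _⟩
  have hδ : 0 < (1 - M) / 4 := by linarith
  have ha : 0 < (1 - M) / 4 * √ω := by positivity
  refine ⟨_, _, by positivity, hδ, fun l hl hlω s y hs hy =>
    one_add_mul_norm_exp_neg_mul_le ha hy ?_⟩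
  have hre : -(M * ‖l‖) ≤ l.re := le_trans (by nlinarith [norm_nonneg l])
    (neg_cos_mul_norm_le_re_of_mem_SigmaSector hε.1.le hl)
  linarith [mul_sqrt_add_le_re_csqrt_add_sq hM0 hM1.le hre hlω hs]
end

section
/- Let ε ∈ (0, π), λ ∈ Σ_ε, α ≥ 0 and s ≥ 0. Then α + λ + s + √(λ + s²) ≠ 0 and λ + (λ + α)(√(λ + s²) − s) ≠ 0. -/
open MeasureTheory Real

/-- the two denominators never vanish on the sector. -/
theorem stmt_16 (ε : ℝ) (hε : ε ∈ Set.Ioo 0 Real.pi) (l : ℂ) (hl : l ∈ SigmaSector ε)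
    (α : ℝ) (hα : 0 ≤ α) (s : ℝ) (hs : 0 ≤ s) :
    (α:ℂ) + l + s + csqrt (l + (s:ℂ)^2) ≠ 0 ∧
    l + (l + α) * (csqrt (l + (s:ℂ)^2) - s) ≠ 0 := by
  obtain ⟨hl0, hlarg⟩ := hl
  have hεπ : 0 < ε := hε.1
  have hpi : Real.pi - ε < Real.pi := by linarith
  have hlre : l.im = 0 → 0 < l.re := by
    intro him
    rcases lt_trichotomy l.re 0 with h | h | h
    · exfalso
      have : l.arg = Real.pi := Complex.arg_eq_pi_iff.mpr ⟨h, him⟩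
      rw [this, abs_of_pos Real.pi_pos] at hlarg
      linarith
    · exact absurd (Complex.ext h him) hl0
    · exact h
  set z : ℂ := l + (s:ℂ)^2 with hzdef
  have hzim : z.im = l.im := by simp [hzdef, ← Complex.ofReal_pow]
  have hzre : z.re = l.re + s^2 := by simp [hzdef, ← Complex.ofReal_pow]
  have hz0 : z ≠ 0 := by
    intro h
    rcases eq_or_ne l.im 0 with him | him
    · have := hlre him
      have : z.re = 0 := by rw [h]; simp
      rw [hzre] at this
      nlinarith [sq_nonneg s, hlre him]
    · exact him (by rw [← hzim, h]; simp)
  have hargz : |z.arg| < Real.pi := by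
    rw [abs_lt]
    constructor
    · exact Complex.neg_pi_lt_arg z
    · rcases lt_or_eq_of_le (Complex.arg_le_pi z) with h | h
      · exact h
      · exfalso
        obtain ⟨h1, h2⟩ := Complex.arg_eq_pi_iff.mp h
        rw [hzim] at h2
        have := hlre h2
        rw [hzre] at h1
        nlinarith [sq_nonneg s]
  set w : ℂ := csqrt z with hwdef
  have hwre : 0 < w.re := by
    have hw : w = Complex.exp (Complex.log z * (1/2 : ℂ)) := by
      rw [hwdef, csqrt, Complex.cpow_def_of_ne_zero hz0]
    have him : (Complex.log z * (1/2 : ℂ)).im = z.arg / 2 := by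
      simp [Complex.mul_im, Complex.log_im]
      ring
    rw [hw, Complex.exp_re, him]
    apply mul_pos (Real.exp_pos _)
    apply Real.cos_pos_of_mem_Ioo
    constructor
    · have := (abs_lt.mp hargz).1; linarith
    · have := (abs_lt.mp hargz).2; linarith
  have hw2 : w * w = z := by
    rw [hwdef, csqrt, ← Complex.cpow_add _ _ hz0]
    norm_num
  have hzl : z = l + (s:ℂ)^2 := hzdef
  have claim1 : (α:ℂ) + l + s + w ≠ 0 := by
    intro h
    have him : l.im + w.im = 0 := by
      have := congrArg Complex.im h
      simpa using this
    have him2 : 2 * w.re * w.im = l.im := by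
      have := congrArg Complex.im hw2
      rw [hzim] at this
      simp [Complex.mul_im] at this
      linarith
    have hwim : w.im = 0 := by nlinarith [sq_nonneg w.im]
    have hlim : l.im = 0 := by linarith
    have hlre' := hlre hlim
    have hre : α + l.re + s + w.re = 0 := by
      have := congrArg Complex.re h
      simpa using this
    linarith
  refine ⟨claim1, ?_⟩
  intro h2
  have hws : w + s ≠ 0 := by
    intro h
    have := congrArg Complex.re h
    simp at this
    linarith
  have key : l * ((α:ℂ) + l + s + w) = (l + (l + α) * (w - s)) * (w + s) := by
    have hw2' : w * w = l + (s:ℂ)^2 := by rw [hw2, hzl]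
    linear_combination (-(l + (α:ℂ))) * hw2'
  rw [h2, zero_mul] at key
  exact (mul_ne_zero hl0 claim1) key
end

section
/- Let ε ∈ (0, π), λ ∈ Σ_ε, α ≥ 0 and s > 0. Then the map y ↦ m₀(s, y) is differentiable on ℝ and, for every y ≥ 0, λ (∂m₀/∂y)(s, y) = −λ s m₀(s, y) − (λ/(α + λ + s + √(λ + s²))) exp(−y √(λ + s²)). -/
open MeasureTheory Real

/-- formula for `λ ∂m₀/∂y`. -/
theorem stmt_18 (ε : ℝ) (hε : ε ∈ Set.Ioo 0 Real.pi) (l : ℂ) (hl : l ∈ SigmaSector ε)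
    (α : ℝ) (hα : 0 ≤ α) (s : ℝ) (hs : 0 < s) :
    (∀ y : ℝ, DifferentiableAt ℝ (fun t : ℝ => m0 l α s t) y) ∧
    ∀ y : ℝ, 0 ≤ y →
      l * deriv (fun t : ℝ => m0 l α s t) y =
        -(l * s * m0 l α s y) -
          (l / ((α:ℂ) + l + s + csqrt (l + (s:ℂ)^2))) *
            Complex.exp (-(y:ℂ) * csqrt (l + (s:ℂ)^2)) := by
  obtain ⟨hl0, hlarg⟩ := hl
  set z : ℂ := l + (s:ℂ)^2 with hzdef
  -- |arg l| < π
  have hargl_lt : |l.arg| < Real.pi := lt_of_lt_of_le hlarg (by linarith [hε.1])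
  -- z ≠ 0
  have hz : z ≠ 0 := by
    intro h
    have hlval : l = -((s:ℂ)^2) := by linear_combination h
    have : l.arg = Real.pi := by
      rw [Complex.arg_eq_pi_iff, hlval]
      constructor
      · have : ((s:ℂ)^2).re = s^2 := by simp [pow_two, Complex.mul_re]
        simp only [Complex.neg_re, this]
        nlinarith
      · simp [pow_two, Complex.mul_im]
    rw [this, abs_of_pos Real.pi_pos] at hargl_lt
    exact lt_irrefl _ hargl_lt
  -- if l.im = 0 then 0 < l.re
  have hre_of_im : l.im = 0 → 0 < l.re := by
    intro him
    rcases lt_trichotomy l.re 0 with h | h | h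
    · exfalso
      have : l.arg = Real.pi := Complex.arg_eq_pi_iff.mpr ⟨h, him⟩
      rw [this, abs_of_pos Real.pi_pos] at hargl_lt
      exact lt_irrefl _ hargl_lt
    · exact absurd (Complex.ext h him) hl0
    · exact h
  -- arg z < π
  have hargz_ne : z.arg ≠ Real.pi := by
    intro h
    obtain ⟨h1, h2⟩ := Complex.arg_eq_pi_iff.mp h
    have himz : z.im = l.im := by simp [hzdef, pow_two, Complex.mul_im, Complex.mul_re]
    have hrez : z.re = l.re + s^2 := by simp [hzdef, pow_two, Complex.mul_im, Complex.mul_re]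
    rw [himz] at h2
    have := hre_of_im h2
    rw [hrez] at h1
    nlinarith
  have hargz_lt : z.arg < Real.pi := lt_of_le_of_ne (Complex.arg_le_pi z) hargz_ne
  have hargz_gt : -Real.pi < z.arg := Complex.neg_pi_lt_arg z
  set q : ℂ := csqrt z with hqdef
  have hqexp : q = Complex.exp (Complex.log z * (1/2 : ℂ)) := by
    rw [hqdef, csqrt, Complex.cpow_def_of_ne_zero hz]
  have hwim : (Complex.log z * (1/2 : ℂ)).im = z.arg / 2 := by
    simp [Complex.mul_im, Complex.log_im]; ring
  have hqim : q.im = Real.exp ((Complex.log z * (1/2 : ℂ)).re) * Real.sin (z.arg / 2) := by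
    rw [hqexp, Complex.exp_im, hwim]
  have hqre : q.re = Real.exp ((Complex.log z * (1/2 : ℂ)).re) * Real.cos (z.arg / 2) := by
    rw [hqexp, Complex.exp_re, hwim]
  have hqre_pos : 0 < q.re := by
    rw [hqre]
    have : 0 < Real.cos (z.arg / 2) :=
      Real.cos_pos_of_mem_Ioo ⟨by linarith, by linarith⟩
    positivity
  -- q^2 = z
  have hq2 : q ^ 2 = z := by
    rw [hqdef, csqrt, sq, ← Complex.cpow_add _ _ hz]
    norm_num
  -- D ≠ 0
  have hD : ((α:ℂ) + l + q + s) ≠ 0 := by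
    rcases eq_or_ne l.im 0 with him | him
    · intro h
      have hDre : ((α:ℂ) + l + q + s).re = α + l.re + q.re + s := by
        simp [Complex.add_re]
      rw [h] at hDre
      have := hre_of_im him
      simp at hDre
      nlinarith
    · intro h
      have hDim : ((α:ℂ) + l + q + s).im = l.im + q.im := by
        simp [Complex.add_im]
      rw [h] at hDim; simp at hDim
      have himz : z.im = l.im := by simp [hzdef, pow_two, Complex.mul_im, Complex.mul_re]
      rcases lt_or_gt_of_ne him with hlt | hgt
      · -- l.im < 0 : arg z < 0, sin(arg/2) < 0
        have hargz_neg : z.arg < 0 := Complex.arg_neg_iff.mpr (by rw [himz]; exact hlt)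
        have : Real.sin (z.arg / 2) < 0 :=
          Real.sin_neg_of_neg_of_neg_pi_lt (by linarith) (by linarith)
        have hq_im_neg : q.im < 0 := by
          rw [hqim]
          exact mul_neg_of_pos_of_neg (Real.exp_pos _) this
        nlinarith
      · have hargz_pos : 0 < z.arg := by
          rcases lt_or_eq_of_le (Complex.arg_nonneg_iff.mpr (by rw [himz]; exact hgt.le)) with h' | h'
          · exact h'
          · exfalso
            have := (Complex.arg_eq_zero_iff.mp h'.symm).2
            rw [himz] at this; exact him this
        have : 0 < Real.sin (z.arg / 2) :=
          Real.sin_pos_of_pos_of_lt_pi (by linarith) (by linarith)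
        have hq_im_pos : 0 < q.im := by
          rw [hqim]; positivity
        nlinarith
  have hD' : ((α:ℂ) + l + s + q) ≠ 0 := by
    intro h; exact hD (by linear_combination h)
  -- derivative
  set A : ℂ := (q + s) / ((α:ℂ) + l + q + s) with hAdef
  have hderiv : ∀ y : ℝ, HasDerivAt (fun t : ℝ => m0 l α s t)
      (A * ((-q * Complex.exp (-(y:ℂ) * q) - (-(s:ℂ)) * Complex.exp (-(y:ℂ) * s)) / l)) y := by
    intro y
    have h0 : HasDerivAt (fun t : ℝ => ((t:ℝ):ℂ)) 1 y := Complex.ofRealCLM.hasDerivAt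
    have e1 : HasDerivAt (fun t : ℝ => Complex.exp (-(t:ℂ) * q))
        (-q * Complex.exp (-(y:ℂ) * q)) y := by
      have h1 : HasDerivAt (fun t : ℝ => -(t:ℂ) * q) (-q) y := by
        simpa using (h0.neg.mul_const q)
      simpa [mul_comm] using h1.cexp
    have e2 : HasDerivAt (fun t : ℝ => Complex.exp (-(t:ℂ) * s))
        (-(s:ℂ) * Complex.exp (-(y:ℂ) * s)) y := by
      have h1 : HasDerivAt (fun t : ℝ => -(t:ℂ) * (s:ℂ)) (-(s:ℂ)) y := by
        simpa using (h0.neg.mul_const (s:ℂ))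
      simpa [mul_comm] using h1.cexp
    have := (((e1.sub e2).div_const l).const_mul A)
    simpa [m0, hAdef, hqdef, hzdef] using this
  constructor
  · exact fun y => (hderiv y).differentiableAt
  · intro y _
    rw [(hderiv y).deriv]
    rw [m0]
    set E1 : ℂ := Complex.exp (-(y:ℂ) * q) with hE1
    set E2 : ℂ := Complex.exp (-(y:ℂ) * s) with hE2
    show l * (A * ((-q * E1 - -(s:ℂ) * E2) / l)) =
      -(l * s * (A * ((E1 - E2) / l))) -
        l / ((α:ℂ) + l + s + q) * E1
    rw [show ((α:ℂ) + l + (s:ℂ) + q) = ((α:ℂ) + l + q + (s:ℂ)) from by ring]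
    have hlq : (q + s) * ((s:ℂ) - q) = -l := by linear_combination -hq2
    have hA : A * ((s:ℂ) - q) = -(l / ((α:ℂ) + l + q + s)) := by
      rw [hAdef, div_mul_eq_mul_div, hlq, neg_div]
    have key : A * (-q * E1 - -(s:ℂ) * E2) =
        -((s:ℂ) * (A * (E1 - E2))) - l / ((α:ℂ) + l + q + s) * E1 := by
      have h := congrArg (· * E1) hA
      linear_combination h
    have hc1 : l * (A * ((-q * E1 - -(s:ℂ) * E2) / l)) = A * (-q * E1 - -(s:ℂ) * E2) := by
      field_simp
    have hc2 : l * s * (A * ((E1 - E2) / l)) = (s:ℂ) * (A * (E1 - E2)) := by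
      field_simp
    rw [hc1, hc2, key]
end

section
/- Let ε ∈ (0, π), λ ∈ Σ_ε, α ≥ 0 and s > 0, and define g : ℝ → ℂ by g(y) := m₀(s, y). Then g is four times differentiable and: (a) g''''(y) − (λ + 2s²) g''(y) + s²(λ + s²) g(y) = 0 for every y ∈ ℝ, i.e. (λ + s² − ∂_y²)(s² − ∂_y²) g = 0; (b) g(0) = 0; and (c) (λ + α) g'(0) − g''(0) = −1. -/
open MeasureTheory Real

noncomputable def Gf (A c : ℂ) (y : ℝ) : ℂ := A * Complex.exp (-(y:ℂ) * c)

lemma Gf_hasDerivAt (A c : ℂ) (y : ℝ) :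
    HasDerivAt (Gf A c) (Gf (A * -c) c y) y := by
  have h : HasDerivAt (fun w : ℂ => A * Complex.exp (-w * c))
      (A * (Complex.exp (-(y:ℂ) * c) * (-1 * c))) (y : ℂ) :=
    (((hasDerivAt_id ((y:ℝ):ℂ)).neg.mul_const c).cexp).const_mul A
  have h2 : HasDerivAt (fun y : ℝ => A * Complex.exp (-(y:ℂ) * c))
      (A * (Complex.exp (-(y:ℂ) * c) * (-1 * c))) y := h.comp_ofReal
  have he : A * (Complex.exp (-(y:ℂ) * c) * (-1 * c)) = Gf (A * -c) c y := by
    simp [Gf]; ring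
  exact he ▸ h2

lemma Gf_deriv (A c : ℂ) : deriv (fun y => Gf A c y) = fun y => Gf (A * -c) c y :=
  funext fun y => (Gf_hasDerivAt A c y).deriv

lemma sum_hasDerivAt (A B c d : ℂ) (y : ℝ) :
    HasDerivAt (fun y => Gf A c y + Gf B d y)
      (Gf (A * -c) c y + Gf (B * -d) d y) y :=
  (Gf_hasDerivAt A c y).add (Gf_hasDerivAt B d y)

lemma sum_deriv (A B c d : ℂ) :
    deriv (fun y => Gf A c y + Gf B d y) = fun y => Gf (A * -c) c y + Gf (B * -d) d y :=
  funext fun y => (sum_hasDerivAt A B c d y).deriv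

lemma sum_iteratedDeriv (A B c d : ℂ) (n : ℕ) :
    iteratedDeriv n (fun y => Gf A c y + Gf B d y)
      = fun y => Gf (A * (-c) ^ n) c y + Gf (B * (-d) ^ n) d y := by
  induction n with
  | zero => simp
  | succ n ih =>
      rw [iteratedDeriv_succ, ih, sum_deriv]
      simp [pow_succ, mul_assoc]

lemma csqrt_mul_self {z : ℂ} (hz : z ≠ 0) : csqrt z * csqrt z = z := by
  rw [csqrt, ← Complex.cpow_add _ _ hz]
  norm_num

lemma csqrt_im_log {z : ℂ} (hz : z ≠ 0) :
    csqrt z = Complex.exp (Complex.log z * (1/2 : ℂ)) := by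
  rw [csqrt, Complex.cpow_def_of_ne_zero hz]

lemma log_half_im (z : ℂ) : (Complex.log z * (1/2 : ℂ)).im = z.arg / 2 := by
  simp [Complex.mul_im, Complex.log_im]
  ring

lemma csqrt_im_pos {z : ℂ} (h : 0 < z.im) : 0 < (csqrt z).im := by
  have hz : z ≠ 0 := fun hz0 => by simp [hz0] at h
  rw [csqrt_im_log hz, Complex.exp_im, log_half_im]
  refine mul_pos (Real.exp_pos _) (Real.sin_pos_of_pos_of_lt_pi ?_ ?_)
  · have h0 : 0 ≤ z.arg := Complex.arg_nonneg_iff.mpr h.le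
    have hne : z.arg ≠ 0 := fun h0' => by
      rcases Complex.arg_eq_zero_iff.mp h0' with ⟨_, him⟩
      exact h.ne' him
    have := lt_of_le_of_ne h0 (Ne.symm hne)
    linarith
  · have := Complex.arg_le_pi z
    linarith [Real.pi_pos]

lemma csqrt_im_neg {z : ℂ} (h : z.im < 0) : (csqrt z).im < 0 := by
  have hz : z ≠ 0 := fun hz0 => by simp [hz0] at h
  rw [csqrt_im_log hz, Complex.exp_im, log_half_im]
  have harg : z.arg < 0 := Complex.arg_neg_iff.mpr h
  have harg' := Complex.neg_pi_lt_arg z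
  have hsin : Real.sin (z.arg / 2) < 0 := by
    have : 0 < Real.sin (-(z.arg / 2)) :=
      Real.sin_pos_of_pos_of_lt_pi (by linarith) (by linarith [Real.pi_pos])
    rw [Real.sin_neg] at this; linarith
  exact mul_neg_of_pos_of_neg (Real.exp_pos _) hsin

lemma denom_ne_zero (l : ℂ) (hl0 : l ≠ 0) (hlarg : |l.arg| < Real.pi) (α s : ℝ)
    (hα : 0 ≤ α) (hs : 0 < s) :
    (α : ℂ) + l + csqrt (l + (s:ℂ)^2) + s ≠ 0 := by
  set μ := csqrt (l + (s:ℂ)^2) with hμ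
  intro hD
  have him0 : l.im + μ.im = 0 := by
    have : ((α : ℂ) + l + μ + s).im = 0 := by rw [hD]; simp
    simpa using this
  have hre0 : α + l.re + μ.re + s = 0 := by
    have : ((α : ℂ) + l + μ + s).re = 0 := by rw [hD]; simp
    simpa using this
  have hzim : (l + (s:ℂ)^2).im = l.im := by simp [pow_two, Complex.mul_im]
  rcases lt_trichotomy l.im 0 with h | h | h
  · have := csqrt_im_neg (z := l + (s:ℂ)^2) (by rw [hzim]; exact h)
    rw [← hμ] at this; linarith
  · rcases lt_or_ge l.re 0 with hre | hre
    · have : l.arg = Real.pi := Complex.arg_eq_pi_iff.mpr ⟨hre, h⟩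
      rw [this, abs_of_pos Real.pi_pos] at hlarg
      exact lt_irrefl _ hlarg
    · have := csqrt_re_nonneg (l + (s:ℂ)^2)
      rw [← hμ] at this; linarith
  · have := csqrt_im_pos (z := l + (s:ℂ)^2) (by rw [hzim]; exact h)
    rw [← hμ] at this; linarith

/-- `m₀` is the fundamental solution of the ODE system. -/
theorem stmt_19 (ε : ℝ) (hε : ε ∈ Set.Ioo 0 Real.pi) (l : ℂ) (hl : l ∈ SigmaSector ε)
    (α : ℝ) (hα : 0 ≤ α) (s : ℝ) (hs : 0 < s) :
    Differentiable ℝ (fun y : ℝ => m0 l α s y) ∧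
    Differentiable ℝ (deriv (fun y : ℝ => m0 l α s y)) ∧
    Differentiable ℝ (iteratedDeriv 2 (fun y : ℝ => m0 l α s y)) ∧
    Differentiable ℝ (iteratedDeriv 3 (fun y : ℝ => m0 l α s y)) ∧
    (∀ y : ℝ,
      iteratedDeriv 4 (fun y : ℝ => m0 l α s y) y
        - (l + 2 * (s:ℂ)^2) * iteratedDeriv 2 (fun y : ℝ => m0 l α s y) y
        + (s:ℂ)^2 * (l + (s:ℂ)^2) * m0 l α s y = 0) ∧
    m0 l α s 0 = 0 ∧
    (l + α) * deriv (fun y : ℝ => m0 l α s y) 0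
      - iteratedDeriv 2 (fun y : ℝ => m0 l α s y) 0 = -1 := by
  obtain ⟨hl0, hlarg'⟩ := hl
  have hlarg : |l.arg| < Real.pi := lt_of_lt_of_le hlarg' (by linarith [hε.1])
  set μ := csqrt (l + (s:ℂ)^2) with hμdef
  have hz : l + (s:ℂ)^2 ≠ 0 := by
    intro h
    have hls : l = ((-(s^2) : ℝ) : ℂ) := by push_cast; linear_combination h
    rw [hls, Complex.arg_ofReal_of_neg (by nlinarith), abs_of_pos Real.pi_pos] at hlarg
    exact lt_irrefl _ hlarg
  have hμ2 : μ * μ = l + (s:ℂ)^2 := csqrt_mul_self hz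
  have hD : (α : ℂ) + l + μ + s ≠ 0 := denom_ne_zero l hl0 hlarg α s hα hs
  set A : ℂ := (μ + s) / (((α : ℂ) + l + μ + s) * l) with hA
  have hrep : (fun y : ℝ => m0 l α s y) = fun y => Gf A μ y + Gf (-A) s y := by
    funext y
    simp only [m0, Gf, hA, ← hμdef]
    field_simp
    ring
  have hdiff : ∀ (P Q : ℂ) (c d : ℂ), Differentiable ℝ (fun y => Gf P c y + Gf Q d y) :=
    fun P Q c d y => (sum_hasDerivAt P Q c d y).differentiableAt
  have hm00 : m0 l α s 0 = 0 := by
    have := congrFun hrep 0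
    simp only [this, Gf]
    simp
  refine ⟨?_, ?_, ?_, ?_, ?_, hm00, ?_⟩
  · rw [hrep]; exact hdiff _ _ _ _
  · rw [hrep, sum_deriv]; exact hdiff _ _ _ _
  · rw [hrep, sum_iteratedDeriv]; exact hdiff _ _ _ _
  · rw [hrep, sum_iteratedDeriv]; exact hdiff _ _ _ _
  · intro y
    have h0 := congrFun hrep y
    rw [hrep, sum_iteratedDeriv, sum_iteratedDeriv]
    simp only [h0, Gf]
    set E1 := Complex.exp (-(y:ℂ) * μ)
    set E2 := Complex.exp (-(y:ℂ) * s)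
    linear_combination (E1 * A * (μ * μ - (s:ℂ)^2)) * hμ2
  · have h1 : deriv (fun y : ℝ => m0 l α s y) 0 = A * -μ + (-A) * -s := by
      rw [hrep, sum_deriv]
      simp [Gf]
    have h2 : iteratedDeriv 2 (fun y : ℝ => m0 l α s y) 0
        = A * (-μ)^2 + (-A) * (-(s:ℂ))^2 := by
      rw [hrep, sum_iteratedDeriv]
      simp [Gf]
    rw [h1, h2]
    have key : (l + (α:ℂ)) * (A * -μ + -A * -(s:ℂ)) - (A * (-μ)^2 + -A * (-(s:ℂ))^2)
        = A * ((s - μ) * ((α:ℂ) + l + μ + s)) := by ring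
    have hval : (μ + s) / (((α:ℂ) + l + μ + s) * l) * ((s - μ) * ((α:ℂ) + l + μ + s))
        = -1 := by
      rw [div_mul_eq_mul_div, div_eq_iff (mul_ne_zero hD hl0)]
      linear_combination (-((α:ℂ) + l + μ + s)) * hμ2
    rw [key, hA]
    exact hval
end
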